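/- arXiv:1503.06149 — 4 statements merged into one kernel-verified Lean document; each statement's English description precedes it below -/
import Mathlib

section
/- Let ρ̄_k be the exact quantum trajectory with parameter p̂ = a and let (ρ^a_k, ρ^b_k, π^a_k, π^b_k) be the two-particle quantum filter. Then the process π^a_k · F(ρ̄_k, ρ^a_k) is a submartingale with respect to the filtration generated by the measurement outcomes, i.e. E[π^a_k F(ρ̄_k, ρ^a_k) | ρ̄_{k-1}, ρ^a_{k-1}, ρ^b_{k-1}, π^a_{k-1}, π^b_{k-1}] ≥ π^a_{k-1} F(ρ̄_{k-1}, ρ^a_{k-1}). -/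
open Matrix
open scoped ComplexOrder Classical

/-- Matrix square root of a positive semidefinite matrix (junk value `0` otherwise). -/
noncomputable def matSqrt {ι : Type*} [Fintype ι] [DecidableEq ι]
    (A : Matrix ι ι ℂ) : Matrix ι ι ℂ :=
  if h : A.PosSemidef then
    (h.1.eigenvectorUnitary : Matrix ι ι ℂ) * diagonal ((↑) ∘ (√·) ∘ h.1.eigenvalues) *
      (star h.1.eigenvectorUnitary : Matrix ι ι ℂ) else 0

/-- Fidelity `F(A,B) = (tr √(√A B √A))²` (square of the usual fidelity). -/
noncomputable def fidelity {ι : Type*} [Fintype ι] [DecidableEq ι]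
    (A B : Matrix ι ι ℂ) : ℝ :=
  ((matSqrt (matSqrt A * B * matSqrt A)).trace.re) ^ 2

/-- Partial Kraus map `ρ ↦ ∑_μ M_μ ρ M_μᴴ`. -/
noncomputable def kraus {n s : ℕ} (M : Fin s → Matrix (Fin n) (Fin n) ℂ)
    (ρ : Matrix (Fin n) (Fin n) ℂ) : Matrix (Fin n) (Fin n) ℂ :=
  ∑ μ, M μ * ρ * (M μ)ᴴ

/-!
Write `g(A, B) = tr √(√A B √A) = ‖√B √A‖₁` for the root fidelity of unnormalised states, and
recall `‖N‖₁ = max Re tr (W N)` over contractions `W`. For one outcome `y`, Douglas factorisation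
`√(K_y A) P_μ = M_μ √A` (and likewise `Q_μ` for `B`) turns a contraction `W` into the contraction
`∑_μ P_μ W Q_μᴴ`, so `Re tr (W √B (∑_μ M_μᴴ M_μ) √A) ≤ g(K_y A, K_y B)`. Summing over `y` with the
optimal `W` gives `g(ρ̄, ρᵃ) ≤ ∑_y g_y`, where `g_y = g(K^a_y ρ̄, K^a_y ρᵃ)`.
The `y`-th term of the expectation equals `πᵃ g_y² / s_y`, where
`s_y = tr K^a_y(ρᵃ) πᵃ + tr K^b_y(ρᵇ) πᵇ` is a probability vector, and Cauchy–Schwarz gives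
`(∑_y g_y)² ≤ ∑_y g_y² / s_y`.
-/

open scoped MatrixOrder

namespace Matrix

variable {ι : Type*} [Fintype ι]

section trace

lemma re_trace_le_re_trace_of_le {A B : Matrix ι ι ℂ} (h : A ≤ B) : A.trace.re ≤ B.trace.re := by
  have := (Complex.le_def.mp (le_iff.mp h).trace_nonneg).1
  rw [trace_sub, Complex.sub_re, Complex.zero_re] at this
  linarith

lemma two_mul_re_trace_conjTranspose_mul_le (X Y : Matrix ι ι ℂ) :
    2 * (Xᴴ * Y).trace.re ≤ (Xᴴ * X).trace.re + (Yᴴ * Y).trace.re := by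
  have h := (Complex.le_def.mp (posSemidef_conjTranspose_mul_self (X - Y)).trace_nonneg).1
  have hYX : (Yᴴ * X).trace = star (Xᴴ * Y).trace := by
    rw [← trace_conjTranspose, conjTranspose_mul, conjTranspose_conjTranspose]
  simp only [conjTranspose_sub, sub_mul, mul_sub, trace_sub, hYX, Complex.sub_re,
    Complex.zero_re, Complex.star_def, Complex.conj_re] at h
  linarith

lemma PosSemidef.trace_eq_ofReal_re {A : Matrix ι ι ℂ} (hA : A.PosSemidef) :
    A.trace = (A.trace.re : ℂ) :=
  Complex.eq_re_of_ofReal_le (r := 0) (by simpa using hA.trace_nonneg)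

lemma PosSemidef.re_trace_nonneg {A : Matrix ι ι ℂ} (hA : A.PosSemidef) : 0 ≤ A.trace.re := by
  simpa using (Complex.le_def.mp hA.trace_nonneg).1

lemma PosSemidef.eq_zero_of_trace_re_eq_zero {A : Matrix ι ι ℂ} (hA : A.PosSemidef)
    (h : A.trace.re = 0) : A = 0 := by
  rw [← hA.trace_eq_zero_iff, hA.trace_eq_ofReal_re, h, Complex.ofReal_zero]

end trace

variable [DecidableEq ι]

section matSqrt

variable {A : Matrix ι ι ℂ}

lemma matSqrt_eq_cfcSqrt (hA : A.PosSemidef) : matSqrt A = CFC.sqrt A := by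
  rw [matSqrt, dif_pos hA, CFC.sqrt_eq_cfc, cfc_nnreal_eq_real _ A hA.nonneg, hA.1.cfc_eq,
    IsHermitian.cfc, Unitary.conjStarAlgAut_apply]
  congr 3
  funext i
  rcases le_total (hA.1.eigenvalues i) 0 with h | h <;> simp [h, Real.sqrt_eq_zero']

lemma posSemidef_matSqrt (A : Matrix ι ι ℂ) : (matSqrt A).PosSemidef := by
  by_cases hA : A.PosSemidef
  · rw [matSqrt_eq_cfcSqrt hA]
    exact (CFC.sqrt_nonneg A).posSemidef
  · rw [matSqrt, dif_neg hA]
    exact PosSemidef.zero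

lemma conjTranspose_matSqrt (A : Matrix ι ι ℂ) : (matSqrt A)ᴴ = matSqrt A :=
  (posSemidef_matSqrt A).1

lemma matSqrt_mul_self (hA : A.PosSemidef) : matSqrt A * matSqrt A = A := by
  rw [matSqrt_eq_cfcSqrt hA]
  exact CFC.sqrt_mul_sqrt_self A hA.nonneg

lemma matSqrt_eq_of_mul_self_eq {B : Matrix ι ι ℂ} (hB : B.PosSemidef) (hBA : B * B = A) :
    matSqrt A = B := by
  have hA : A.PosSemidef := by
    rw [← hBA]; nth_rw 1 [← hB.1.eq]; exact posSemidef_conjTranspose_mul_self B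
  rw [matSqrt_eq_cfcSqrt hA]
  exact CFC.sqrt_unique hBA hB.nonneg

lemma matSqrt_zero : matSqrt (0 : Matrix ι ι ℂ) = 0 :=
  matSqrt_eq_of_mul_self_eq PosSemidef.zero (mul_zero 0)

lemma matSqrt_smul (hA : A.PosSemidef) {c : ℝ} (hc : 0 ≤ c) :
    matSqrt ((c : ℂ) • A) = ((√c : ℝ) : ℂ) • matSqrt A := by
  refine matSqrt_eq_of_mul_self_eq
    ((posSemidef_matSqrt A).smul (Complex.zero_le_real.mpr (Real.sqrt_nonneg c))) ?_
  rw [smul_mul_smul, matSqrt_mul_self hA, ← Complex.ofReal_mul, Real.mul_self_sqrt hc]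

end matSqrt

section pinv

/-- Since `(0 : ℝ)⁻¹ = 0`, this inverts only the nonzero eigenvalues: for Hermitian `R` it is the
Moore–Penrose pseudo-inverse. -/
noncomputable def pinv (R : Matrix ι ι ℂ) : Matrix ι ι ℂ := cfc (fun x : ℝ => x⁻¹) R

variable {R : Matrix ι ι ℂ}

lemma cfc_mul_cfc (f g : ℝ → ℝ) : cfc f R * cfc g R = cfc (fun x => f x * g x) R :=
  (cfc_mul f g R (R.finite_real_spectrum.continuousOn f)
    (R.finite_real_spectrum.continuousOn g)).symm

lemma cfc_mul_self (hR : R.IsHermitian) (f : ℝ → ℝ) :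
    cfc f R * R = cfc (fun x => f x * x) R := by
  conv_lhs => arg 2; rw [← cfc_id' ℝ R hR.isSelfAdjoint]
  exact cfc_mul_cfc f id

lemma self_mul_cfc (hR : R.IsHermitian) (f : ℝ → ℝ) :
    R * cfc f R = cfc (fun x => x * f x) R := by
  conv_lhs => arg 1; rw [← cfc_id' ℝ R hR.isSelfAdjoint]
  exact cfc_mul_cfc id f

lemma conjTranspose_pinv : (pinv R)ᴴ = pinv R :=
  IsSelfAdjoint.cfc.star_eq

lemma pinv_mul_self_mul_self (hR : R.IsHermitian) : pinv R * (R * R) = R := by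
  rw [← mul_assoc, pinv, cfc_mul_self hR, cfc_mul_self hR]
  nth_rw 2 [← cfc_id' ℝ R hR.isSelfAdjoint]
  exact cfc_congr fun x _ => by by_cases hx : x = 0 <;> simp [hx]

lemma pinv_mul_sq_mul_pinv_le_one (hR : R.IsHermitian) : pinv R * (R * R) * pinv R ≤ 1 := by
  rw [← mul_assoc, pinv, cfc_mul_self hR, cfc_mul_self hR, cfc_mul_cfc]
  refine cfc_le_one _ _ fun x _ => ?_
  by_cases hx : x = 0 <;> simp [hx]

lemma self_mul_pinv_mul_of_mul_conjTranspose_le (hR : R.IsHermitian) {C : Matrix ι ι ℂ}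
    (hC : C * Cᴴ ≤ R * R) : R * (pinv R * C) = C := by
  set E : Matrix ι ι ℂ := 1 - R * pinv R
  have hE : E = cfc (fun x : ℝ => 1 - x * x⁻¹) R := by
    rw [cfc_sub _ _ _ (R.finite_real_spectrum.continuousOn _)
      (R.finite_real_spectrum.continuousOn _), cfc_const_one ℝ R, ← self_mul_cfc hR]
    rfl
  have hEsa : Eᴴ = E := by rw [hE]; exact IsSelfAdjoint.cfc.star_eq
  have hER : E * R = 0 := by
    rw [hE, cfc_mul_self hR, ← cfc_zero ℝ R]
    exact cfc_congr fun x _ => by by_cases hx : x = 0 <;> simp [hx]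
  -- `E` projects onto `ker R`, so `E C Cᴴ E ≤ E R² E = 0`.
  have hEC : (E * C) * (E * C)ᴴ ≤ 0 := by
    have := star_left_conjugate_le_conjugate hC E
    rw [star_eq_conjTranspose, hEsa, ← mul_assoc E R, hER, zero_mul, zero_mul] at this
    rw [conjTranspose_mul, hEsa]
    simpa only [mul_assoc] using this
  have : E * C = 0 := self_mul_conjTranspose_eq_zero.mp
    (le_antisymm hEC (posSemidef_self_mul_conjTranspose _).nonneg)
  rw [← mul_assoc, ← sub_eq_zero, ← neg_eq_zero, neg_sub, ← this]
  simp [E, sub_mul]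

end pinv

section contraction

variable {T : Matrix ι ι ℂ}

lemma posSemidef_fromBlocks_one_iff_conjTranspose_mul_self_le_one :
    (fromBlocks 1 T Tᴴ 1).PosSemidef ↔ Tᴴ * T ≤ 1 := by
  let := invertibleOne (α := Matrix ι ι ℂ)
  rw [PosDef.fromBlocks₁₁ _ _ PosDef.one, inv_one, mul_one, le_iff]

lemma posSemidef_fromBlocks_one_iff_mul_conjTranspose_self_le_one :
    (fromBlocks 1 T Tᴴ 1).PosSemidef ↔ T * Tᴴ ≤ 1 := by
  let := invertibleOne (α := Matrix ι ι ℂ)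
  rw [PosDef.fromBlocks₂₂ _ _ PosDef.one, inv_one, mul_one, le_iff]

lemma PosSemidef.fromBlocks_diag {X Y : Matrix ι ι ℂ} (hX : X.PosSemidef) (hY : Y.PosSemidef) :
    (fromBlocks X 0 0 Y).PosSemidef := by
  have := posSemidef_self_mul_conjTranspose (fromBlocks (matSqrt X) 0 0 (matSqrt Y))
  simpa [fromBlocks_conjTranspose, fromBlocks_multiply, conjTranspose_matSqrt X,
    conjTranspose_matSqrt Y, matSqrt_mul_self hX, matSqrt_mul_self hY] using this

lemma conjTranspose_mul_self_le_one_of_sum {κ : Type*} [Fintype κ] {P Q : κ → Matrix ι ι ℂ}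
    {W : Matrix ι ι ℂ} (hP : ∑ μ, P μ * (P μ)ᴴ ≤ 1) (hQ : ∑ μ, Q μ * (Q μ)ᴴ ≤ 1)
    (hW : W * Wᴴ ≤ 1) :
    (∑ μ, P μ * W * (Q μ)ᴴ)ᴴ * (∑ μ, P μ * W * (Q μ)ᴴ) ≤ 1 := by
  rw [← posSemidef_fromBlocks_one_iff_conjTranspose_mul_self_le_one]
  have hJ := posSemidef_fromBlocks_one_iff_mul_conjTranspose_self_le_one.mpr hW
  have hsplit : fromBlocks 1 (∑ μ, P μ * W * (Q μ)ᴴ) (∑ μ, P μ * W * (Q μ)ᴴ)ᴴ 1 =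
      fromBlocks (1 - ∑ μ, P μ * (P μ)ᴴ) 0 0 (1 - ∑ μ, Q μ * (Q μ)ᴴ) +
        ∑ μ, fromBlocks (P μ) 0 0 (Q μ) * fromBlocks 1 W Wᴴ 1 * (fromBlocks (P μ) 0 0 (Q μ))ᴴ := by
    simp only [fromBlocks_conjTranspose, fromBlocks_multiply]
    ext (i | i) (j | j) <;> simp [Matrix.sum_apply, conjTranspose_sum, mul_assoc]
  rw [hsplit]
  exact ((le_iff.mp hP).fromBlocks_diag (le_iff.mp hQ)).add
    (posSemidef_sum _ fun μ _ => hJ.mul_mul_conjTranspose_same _)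

lemma exists_mul_eq_and_sum_le_one_of_sum_eq {κ : Type*} [Fintype κ] {R : Matrix ι ι ℂ}
    (hR : R.IsHermitian) (C : κ → Matrix ι ι ℂ) (hC : ∑ μ, C μ * (C μ)ᴴ = R * R) :
    ∃ P : κ → Matrix ι ι ℂ, (∀ μ, R * P μ = C μ) ∧ ∑ μ, P μ * (P μ)ᴴ ≤ 1 := by
  refine ⟨fun μ => pinv R * C μ, fun μ => ?_, ?_⟩
  · refine self_mul_pinv_mul_of_mul_conjTranspose_le hR (hC ▸ ?_)
    exact Finset.single_le_sum (fun ν _ => (posSemidef_self_mul_conjTranspose (C ν)).nonneg)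
      (Finset.mem_univ μ)
  · have hsum : ∑ μ, pinv R * C μ * (pinv R * C μ)ᴴ = pinv R * (∑ μ, C μ * (C μ)ᴴ) * pinv R := by
      simp only [conjTranspose_mul, conjTranspose_pinv, Finset.mul_sum, Finset.sum_mul, mul_assoc]
    rw [hsum, hC]
    exact pinv_mul_sq_mul_pinv_le_one hR

end contraction

lemma conjTranspose_mul_mul_le_of_le_one {A X : Matrix ι ι ℂ} (hA : A ≤ 1) :
    Xᴴ * A * X ≤ Xᴴ * X := by
  simpa [star_eq_conjTranspose] using star_left_conjugate_le_conjugate hA X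

section traceNorm

noncomputable def traceNorm (N : Matrix ι ι ℂ) : ℝ := (matSqrt (Nᴴ * N)).trace.re

lemma re_trace_mul_le_traceNorm {T : Matrix ι ι ℂ} (hT : Tᴴ * T ≤ 1) (N : Matrix ι ι ℂ) :
    (T * N).trace.re ≤ traceNorm N := by
  -- Polar decomposition `N = V R` with `V` a contraction; then `tr (T N) = tr (√Rᴴ (T V √R))`
  -- is at most `tr R` by AM–GM for the Frobenius inner product.
  have hNN := posSemidef_conjTranspose_mul_self N
  set R := matSqrt (Nᴴ * N)
  have hR : R.PosSemidef := posSemidef_matSqrt _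
  have hRR : R * R = Nᴴ * N := matSqrt_mul_self hNN
  set V := N * pinv R
  have hVR : V * R = N := by
    have := self_mul_pinv_mul_of_mul_conjTranspose_le hR.1 (C := Nᴴ)
      (by rw [conjTranspose_conjTranspose, hRR])
    simpa [V, conjTranspose_mul, conjTranspose_pinv, hR.1.eq, mul_assoc] using
      congrArg conjTranspose this
  have hVV : Vᴴ * V ≤ 1 := by
    have hVV : Vᴴ * V = pinv R * (Nᴴ * N) * pinv R := by
      simp only [V, conjTranspose_mul, conjTranspose_pinv, mul_assoc]
    rw [hVV, ← hRR]
    exact pinv_mul_sq_mul_pinv_le_one hR.1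
  have hTV : (T * V)ᴴ * (T * V) ≤ 1 := by
    calc (T * V)ᴴ * (T * V) = Vᴴ * (Tᴴ * T) * V := by simp [conjTranspose_mul, mul_assoc]
      _ ≤ Vᴴ * V := conjTranspose_mul_mul_le_of_le_one hT
      _ ≤ 1 := hVV
  set S := matSqrt R
  have hSS : S * S = R := matSqrt_mul_self hR
  have hS : Sᴴ = S := conjTranspose_matSqrt R
  have htrace : (T * N).trace = (Sᴴ * (T * V * S)).trace := by
    rw [hS, ← hVR, ← hSS, trace_mul_comm S, mul_assoc (T * V), mul_assoc T]
  have hbound : ((T * V * S)ᴴ * (T * V * S)).trace.re ≤ (Sᴴ * S).trace.re := by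
    refine re_trace_le_re_trace_of_le ?_
    simpa [conjTranspose_mul, mul_assoc] using conjTranspose_mul_mul_le_of_le_one hTV (X := S)
  have hnorm : traceNorm N = (Sᴴ * S).trace.re := by rw [hS, hSS]; rfl
  have := two_mul_re_trace_conjTranspose_mul_le S (T * V * S)
  rw [htrace]
  linarith

lemma exists_re_trace_mul_eq_traceNorm (N : Matrix ι ι ℂ) :
    ∃ W : Matrix ι ι ℂ, W * Wᴴ ≤ 1 ∧ (W * N).trace.re = traceNorm N := by
  have hNN := posSemidef_conjTranspose_mul_self N
  set R := matSqrt (Nᴴ * N)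
  have hRR : R * R = Nᴴ * N := matSqrt_mul_self hNN
  refine ⟨pinv R * Nᴴ, ?_, ?_⟩
  · have hWW : pinv R * Nᴴ * (pinv R * Nᴴ)ᴴ = pinv R * (R * R) * pinv R := by
      rw [hRR]
      simp only [conjTranspose_mul, conjTranspose_conjTranspose, conjTranspose_pinv, mul_assoc]
    rw [hWW]
    exact pinv_mul_sq_mul_pinv_le_one (posSemidef_matSqrt _).1
  · rw [mul_assoc, ← hRR, pinv_mul_self_mul_self (posSemidef_matSqrt _).1]
    rfl

end traceNorm

end Matrix

section fidelity

variable {ι : Type*} [Fintype ι] [DecidableEq ι]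

noncomputable def fidelityRoot (A B : Matrix ι ι ℂ) : ℝ :=
  (matSqrt (matSqrt A * B * matSqrt A)).trace.re

lemma fidelityRoot_nonneg (A B : Matrix ι ι ℂ) : 0 ≤ fidelityRoot A B :=
  (posSemidef_matSqrt _).re_trace_nonneg

lemma fidelityRoot_zero_left (B : Matrix ι ι ℂ) : fidelityRoot 0 B = 0 := by
  simp [fidelityRoot, matSqrt_zero]

lemma fidelityRoot_zero_right (A : Matrix ι ι ℂ) : fidelityRoot A 0 = 0 := by
  simp [fidelityRoot, matSqrt_zero]

lemma fidelityRoot_eq_traceNorm {B : Matrix ι ι ℂ} (hB : B.PosSemidef) (A : Matrix ι ι ℂ) :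
    fidelityRoot A B = traceNorm (matSqrt B * matSqrt A) := by
  rw [fidelityRoot, traceNorm, conjTranspose_mul, conjTranspose_matSqrt, conjTranspose_matSqrt]
  simp only [mul_assoc]
  rw [← mul_assoc (matSqrt B) (matSqrt B), matSqrt_mul_self hB]

lemma fidelity_smul_smul {A B : Matrix ι ι ℂ} (hA : A.PosSemidef) (hB : B.PosSemidef) {a b : ℝ}
    (ha : 0 ≤ a) (hb : 0 ≤ b) :
    fidelity ((a : ℂ) • A) ((b : ℂ) • B) = a * b * fidelity A B := by
  have hinner : (matSqrt A * B * matSqrt A).PosSemidef := by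
    simpa [conjTranspose_matSqrt] using hB.conjTranspose_mul_mul_same (matSqrt A)
  have hscale : matSqrt ((a : ℂ) • A) * ((b : ℂ) • B) * matSqrt ((a : ℂ) • A) =
      ((a * b : ℝ) : ℂ) • (matSqrt A * B * matSqrt A) := by
    rw [matSqrt_smul hA ha, smul_mul_smul, smul_mul_smul, mul_right_comm, ← Complex.ofReal_mul,
      Real.mul_self_sqrt ha, Complex.ofReal_mul]
  rw [fidelity, fidelity, hscale, matSqrt_smul hinner (mul_nonneg ha hb), trace_smul, smul_eq_mul,
    Complex.re_ofReal_mul, mul_pow, Real.sq_sqrt (mul_nonneg ha hb)]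

lemma fidelity_inv_trace_smul {A B : Matrix ι ι ℂ} (hA : A.PosSemidef) (hB : B.PosSemidef) :
    fidelity (A.trace⁻¹ • A) (B.trace⁻¹ • B) =
      fidelityRoot A B ^ 2 / (A.trace.re * B.trace.re) := by
  have hA' : A.trace⁻¹ = ((A.trace.re)⁻¹ : ℝ) := by
    rw [Complex.ofReal_inv, ← hA.trace_eq_ofReal_re]
  have hB' : B.trace⁻¹ = ((B.trace.re)⁻¹ : ℝ) := by
    rw [Complex.ofReal_inv, ← hB.trace_eq_ofReal_re]
  rw [hA', hB', fidelity_smul_smul hA hB (inv_nonneg.mpr hA.re_trace_nonneg)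
    (inv_nonneg.mpr hB.re_trace_nonneg), div_eq_inv_mul, mul_inv]
  rfl

lemma re_trace_mul_posterior_mul_fidelity {A B : Matrix ι ι ℂ} (hA : A.PosSemidef)
    (hB : B.PosSemidef) (π s : ℝ) :
    A.trace.re * (B.trace.re * π / s * fidelity (A.trace⁻¹ • A) (B.trace⁻¹ • B)) =
      π * (fidelityRoot A B ^ 2 / s) := by
  rw [fidelity_inv_trace_smul hA hB]
  rcases eq_or_ne A.trace.re 0 with hA0 | hA0
  · simp [hA.eq_zero_of_trace_re_eq_zero hA0, fidelityRoot_zero_left]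
  rcases eq_or_ne B.trace.re 0 with hB0 | hB0
  · simp [hB.eq_zero_of_trace_re_eq_zero hB0, fidelityRoot_zero_right]
  field_simp

end fidelity

section kraus

variable {n s : ℕ}

lemma posSemidef_kraus (M : Fin s → Matrix (Fin n) (Fin n) ℂ) {ρ : Matrix (Fin n) (Fin n) ℂ}
    (hρ : ρ.PosSemidef) : (kraus M ρ).PosSemidef :=
  posSemidef_sum _ fun μ _ => hρ.mul_mul_conjTranspose_same (M μ)

lemma sum_re_trace_kraus {m : ℕ} {M : Fin m → Fin s → Matrix (Fin n) (Fin n) ℂ}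
    (hM : ∑ y, ∑ μ, (M y μ)ᴴ * M y μ = 1) (ρ : Matrix (Fin n) (Fin n) ℂ) :
    ∑ y, (kraus (M y) ρ).trace.re = ρ.trace.re := by
  simp_rw [← Complex.re_sum, kraus, trace_sum, trace_mul_cycle _ ρ, ← trace_sum, ← Finset.sum_mul,
    hM, one_mul]

lemma re_trace_mul_le_fidelityRoot_kraus (M : Fin s → Matrix (Fin n) (Fin n) ℂ)
    {A B W : Matrix (Fin n) (Fin n) ℂ} (hA : A.PosSemidef) (hB : B.PosSemidef)
    (hW : W * Wᴴ ≤ 1) :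
    (W * (matSqrt B * ((∑ μ, (M μ)ᴴ * M μ) * matSqrt A))).trace.re ≤
      fidelityRoot (kraus M A) (kraus M B) := by
  have hfactor : ∀ {ρ : Matrix (Fin n) (Fin n) ℂ}, ρ.PosSemidef →
      ∑ μ, M μ * matSqrt ρ * (M μ * matSqrt ρ)ᴴ = matSqrt (kraus M ρ) * matSqrt (kraus M ρ) := by
    intro ρ hρ
    rw [matSqrt_mul_self (posSemidef_kraus M hρ), kraus]
    refine Finset.sum_congr rfl fun μ _ => ?_
    rw [conjTranspose_mul, conjTranspose_matSqrt, mul_assoc, ← mul_assoc (matSqrt ρ),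
      matSqrt_mul_self hρ, ← mul_assoc]
  obtain ⟨P, hP, hPP⟩ := exists_mul_eq_and_sum_le_one_of_sum_eq
    (posSemidef_matSqrt (kraus M A)).1 _ (hfactor hA)
  obtain ⟨Q, hQ, hQQ⟩ := exists_mul_eq_and_sum_le_one_of_sum_eq
    (posSemidef_matSqrt (kraus M B)).1 _ (hfactor hB)
  have htrace : (W * (matSqrt B * ((∑ μ, (M μ)ᴴ * M μ) * matSqrt A))).trace =
      ((∑ μ, P μ * W * (Q μ)ᴴ) * (matSqrt (kraus M B) * matSqrt (kraus M A))).trace := by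
    simp only [Finset.sum_mul, Finset.mul_sum, trace_sum]
    refine Finset.sum_congr rfl fun μ _ => ?_
    have h : matSqrt B * ((M μ)ᴴ * M μ * matSqrt A) = (M μ * matSqrt B)ᴴ * (M μ * matSqrt A) := by
      simp only [conjTranspose_mul, conjTranspose_matSqrt, mul_assoc]
    rw [h, ← hP μ, ← hQ μ, conjTranspose_mul, conjTranspose_matSqrt]
    simp only [mul_assoc]
    rw [trace_mul_comm (P μ)]
    simp only [mul_assoc]
  calc (W * (matSqrt B * ((∑ μ, (M μ)ᴴ * M μ) * matSqrt A))).trace.re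
      ≤ traceNorm (matSqrt (kraus M B) * matSqrt (kraus M A)) := by
        rw [htrace]
        exact re_trace_mul_le_traceNorm (conjTranspose_mul_self_le_one_of_sum hPP hQQ hW) _
    _ = fidelityRoot (kraus M A) (kraus M B) :=
        (fidelityRoot_eq_traceNorm (posSemidef_kraus M hB) _).symm

lemma fidelityRoot_le_sum_kraus {m : ℕ} (M : Fin m → Fin s → Matrix (Fin n) (Fin n) ℂ)
    (hM : ∑ y, ∑ μ, (M y μ)ᴴ * M y μ = 1) {A B : Matrix (Fin n) (Fin n) ℂ}
    (hA : A.PosSemidef) (hB : B.PosSemidef) :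
    fidelityRoot A B ≤ ∑ y, fidelityRoot (kraus (M y) A) (kraus (M y) B) := by
  obtain ⟨W, hW, hWN⟩ := exists_re_trace_mul_eq_traceNorm (matSqrt B * matSqrt A)
  calc fidelityRoot A B
      = (W * (matSqrt B * ((∑ y, ∑ μ, (M y μ)ᴴ * M y μ) * matSqrt A))).trace.re := by
        rw [hM, one_mul, fidelityRoot_eq_traceNorm hB, hWN]
    _ = ∑ y, (W * (matSqrt B * ((∑ μ, (M y μ)ᴴ * M y μ) * matSqrt A))).trace.re := by
        simp only [Finset.sum_mul, Finset.mul_sum, trace_sum, Complex.re_sum]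
    _ ≤ ∑ y, fidelityRoot (kraus (M y) A) (kraus (M y) B) :=
        Finset.sum_le_sum fun y _ => re_trace_mul_le_fidelityRoot_kraus (M y) hA hB hW

end kraus

lemma sq_sum_le_sum_sq_div {κ : Type*} [Fintype κ] {g w : κ → ℝ} (hw : ∀ y, 0 ≤ w y)
    (hw1 : ∑ y, w y = 1) (hg : ∀ y, w y = 0 → g y = 0) :
    (∑ y, g y) ^ 2 ≤ ∑ y, g y ^ 2 / w y := by
  have h := Finset.sum_sq_le_sum_mul_sum_of_sq_le_mul Finset.univ (r := g)
    (fun y _ => hw y) (fun y _ => div_nonneg (sq_nonneg (g y)) (hw y)) fun y _ => by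
      rcases eq_or_ne (w y) 0 with h0 | h0
      · simp [h0, hg y h0]
      · rw [mul_div_cancel₀ _ h0]
  rwa [hw1, one_mul] at h

theorem stmt4_general {n m sa sb : ℕ}
    (Ma : Fin m → Fin sa → Matrix (Fin n) (Fin n) ℂ)
    (Mb : Fin m → Fin sb → Matrix (Fin n) (Fin n) ℂ)
    (hMa : ∑ y, ∑ μ, (Ma y μ)ᴴ * Ma y μ = 1)
    (hMb : ∑ y, ∑ μ, (Mb y μ)ᴴ * Mb y μ = 1)
    (ρbar ρa ρb : Matrix (Fin n) (Fin n) ℂ)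
    (hbar : ρbar.PosSemidef)
    (hρa : ρa.PosSemidef) (hρat : ρa.trace = 1)
    (hρb : ρb.PosSemidef) (hρbt : ρb.trace = 1)
    (πa πb : ℝ) (hπa : 0 ≤ πa) (hπb : 0 ≤ πb) (hsum : πa + πb = 1) :
    πa * fidelity ρbar ρa ≤
      ∑ y : Fin m, (kraus (Ma y) ρbar).trace.re *
        (((kraus (Ma y) ρa).trace.re * πa /
            ((kraus (Ma y) ρa).trace.re * πa + (kraus (Mb y) ρb).trace.re * πb)) *
          fidelity (((kraus (Ma y) ρbar).trace)⁻¹ • kraus (Ma y) ρbar)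
            (((kraus (Ma y) ρa).trace)⁻¹ • kraus (Ma y) ρa)) := by
  simp_rw [re_trace_mul_posterior_mul_fidelity (posSemidef_kraus _ hbar) (posSemidef_kraus _ hρa),
    ← Finset.mul_sum]
  rcases hπa.eq_or_lt with rfl | hπa_pos
  · simp
  refine mul_le_mul_of_nonneg_left ?_ hπa
  have hq y := (posSemidef_kraus (Ma y) hρa).re_trace_nonneg
  have hr y := (posSemidef_kraus (Mb y) hρb).re_trace_nonneg
  calc fidelity ρbar ρa = fidelityRoot ρbar ρa ^ 2 := rfl
    _ ≤ (∑ y, fidelityRoot (kraus (Ma y) ρbar) (kraus (Ma y) ρa)) ^ 2 :=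
        pow_le_pow_left₀ (fidelityRoot_nonneg _ _) (fidelityRoot_le_sum_kraus Ma hMa hbar hρa) 2
    _ ≤ _ := by
        refine sq_sum_le_sum_sq_div
          (fun y => add_nonneg (mul_nonneg (hq y) hπa) (mul_nonneg (hr y) hπb)) ?_ fun y hy => ?_
        · rw [Finset.sum_add_distrib, ← Finset.sum_mul, ← Finset.sum_mul, sum_re_trace_kraus hMa,
            sum_re_trace_kraus hMb, hρat, hρbt, Complex.one_re, one_mul, one_mul, hsum]
        · have hq0 : (kraus (Ma y) ρa).trace.re = 0 := by
            nlinarith [hq y, hr y]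
          rw [(posSemidef_kraus (Ma y) hρa).eq_zero_of_trace_re_eq_zero hq0,
            fidelityRoot_zero_right]

/-- For the two-particle quantum filter with true parameter `a`,
the process `π^a_k F(ρ̄_k, ρ^a_k)` is a submartingale: its conditional
expectation over the outcome `y` (which occurs with probability `tr(K^a_y(ρ̄))`)
is at least its current value `π^a F(ρ̄, ρ^a)`. -/
theorem stmt4 {n m sa sb : ℕ}
    (Ma : Fin m → Fin sa → Matrix (Fin n) (Fin n) ℂ)
    (Mb : Fin m → Fin sb → Matrix (Fin n) (Fin n) ℂ)
    (hMa : ∑ y, ∑ μ, (Ma y μ)ᴴ * Ma y μ = 1)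
    (hMb : ∑ y, ∑ μ, (Mb y μ)ᴴ * Mb y μ = 1)
    (ρbar ρa ρb : Matrix (Fin n) (Fin n) ℂ)
    (hbar : ρbar.PosSemidef) (hbart : ρbar.trace = 1)
    (hρa : ρa.PosSemidef) (hρat : ρa.trace = 1)
    (hρb : ρb.PosSemidef) (hρbt : ρb.trace = 1)
    (πa πb : ℝ) (hπa : 0 ≤ πa) (hπb : 0 ≤ πb) (hsum : πa + πb = 1) :
    πa * fidelity ρbar ρa ≤
      ∑ y : Fin m, (kraus (Ma y) ρbar).trace.re *
        (((kraus (Ma y) ρa).trace.re * πa /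
            ((kraus (Ma y) ρa).trace.re * πa + (kraus (Mb y) ρb).trace.re * πb)) *
          fidelity (((kraus (Ma y) ρbar).trace)⁻¹ • kraus (Ma y) ρbar)
            (((kraus (Ma y) ρa).trace)⁻¹ • kraus (Ma y) ρa)) :=
  stmt4_general Ma Mb hMa hMb ρbar ρa ρb hbar hρa hρat hρb hρbt πa πb hπa hπb hsum
end

section
/- Let q, r : {1,…,m} → [0,1] be two probability distributions (Σ_y q_y = Σ_y r_y = 1) and let π^a, π^b ∈ [0,1] with π^a + π^b = 1 and π^a q_y + π^b r_y > 0 for all y. Then Σ_y q_y · (π^a q_y)/(π^a q_y + π^b r_y) ≥ π^a. -/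
open Finset

theorem stmt6_general {m : ℕ} (q r : Fin m → ℝ)
    (hq1 : ∑ y, q y = 1) (hr1 : ∑ y, r y = 1)
    (πa πb : ℝ) (hπa : πa ∈ Set.Icc (0 : ℝ) 1)
    (hsum : πa + πb = 1)
    (hpos : ∀ y, 0 < πa * q y + πb * r y) :
    πa ≤ ∑ y, q y * (πa * q y / (πa * q y + πb * r y)) := by
  have hmixture : ∑ y, (πa * q y + πb * r y) = 1 := by
    rw [sum_add_distrib, ← mul_sum, ← mul_sum, hq1, hr1, mul_one, mul_one, hsum]
  -- Sedrakyan (Cauchy–Schwarz): `∑ q²/d ≥ (∑ q)² / ∑ d = 1` for the mixture `d = πa q + πb r`.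
  have hsedrakyan : 1 ≤ ∑ y, q y ^ 2 / (πa * q y + πb * r y) := by
    simpa [hq1, hmixture] using sq_sum_div_le_sum_sq_div univ q fun y _ => hpos y
  calc πa = πa * 1 := (mul_one πa).symm
    _ ≤ πa * ∑ y, q y ^ 2 / (πa * q y + πb * r y) :=
        mul_le_mul_of_nonneg_left hsedrakyan hπa.1
    _ = ∑ y, q y * (πa * q y / (πa * q y + πb * r y)) := by
        rw [mul_sum]
        refine sum_congr rfl fun y _ => ?_
        ring

/-- Key submartingale inequality. If `q, r : {1,…,m} → [0,1]` are
probability distributions, `π^a, π^b ∈ [0,1]` with `π^a + π^b = 1` and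
`π^a q_y + π^b r_y > 0` for all `y`, then
`∑_y q_y (π^a q_y)/(π^a q_y + π^b r_y) ≥ π^a`. -/
theorem stmt6 {m : ℕ} (q r : Fin m → ℝ)
    (hq : ∀ y, q y ∈ Set.Icc (0 : ℝ) 1) (hr : ∀ y, r y ∈ Set.Icc (0 : ℝ) 1)
    (hq1 : ∑ y, q y = 1) (hr1 : ∑ y, r y = 1)
    (πa πb : ℝ) (hπa : πa ∈ Set.Icc (0 : ℝ) 1) (hπb : πb ∈ Set.Icc (0 : ℝ) 1)
    (hsum : πa + πb = 1)
    (hpos : ∀ y, 0 < πa * q y + πb * r y) :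
    πa ≤ ∑ y, q y * (πa * q y / (πa * q y + πb * r y)) :=
  stmt6_general q r hq1 hr1 πa πb hπa hsum hpos
end

section
/- In the r-parameter setting, let q_1,…,q_r : {1,…,m} → [0,1] be probability distributions and π_1,…,π_r ∈ [0,1] with Σ_l π_l = 1 and Σ_l π_l q_l(y) > 0 for all y. Then for any fixed index l₀, Σ_y q_{l₀}(y) · (π_{l₀} q_{l₀}(y)) / (Σ_l π_l q_l(y)) ≥ π_{l₀}. -/
/-- r-parameter expectation inequality. If `q_1,…,q_r` are probability
distributions on `{1,…,m}` and `π_1,…,π_r ∈ [0,1]` with `∑_l π_l = 1` and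
`∑_l π_l q_l(y) > 0` for all `y`, then for any fixed `l₀`,
`∑_y q_{l₀}(y) (π_{l₀} q_{l₀}(y))/(∑_l π_l q_l(y)) ≥ π_{l₀}`. -/
theorem stmt7 {r m : ℕ} (q : Fin r → Fin m → ℝ)
    (hq : ∀ l y, q l y ∈ Set.Icc (0 : ℝ) 1)
    (hq1 : ∀ l, ∑ y, q l y = 1)
    (π : Fin r → ℝ) (hπ : ∀ l, π l ∈ Set.Icc (0 : ℝ) 1)
    (hπ1 : ∑ l, π l = 1)
    (hpos : ∀ y, 0 < ∑ l, π l * q l y)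
    (l₀ : Fin r) :
    π l₀ ≤ ∑ y, q l₀ y * (π l₀ * q l₀ y / ∑ l, π l * q l y) := by
  have key : (1 : ℝ) ≤ ∑ y, q l₀ y ^ 2 / ∑ l, π l * q l y := by
    have h := Finset.sq_sum_div_le_sum_sq_div Finset.univ (q l₀)
      (g := fun y => ∑ l, π l * q l y) (fun y _ => hpos y)
    have hS : ∑ y, ∑ l, π l * q l y = 1 := by
      rw [Finset.sum_comm]
      simp_rw [← Finset.mul_sum, hq1, mul_one, hπ1]
    rw [hq1, hS] at h
    simpa using h
  have hπ0 : 0 ≤ π l₀ := (hπ l₀).1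
  calc π l₀ = π l₀ * 1 := (mul_one _).symm
    _ ≤ π l₀ * ∑ y, q l₀ y ^ 2 / ∑ l, π l * q l y := by
        exact mul_le_mul_of_nonneg_left key hπ0
    _ = ∑ y, q l₀ y * (π l₀ * q l₀ y / ∑ l, π l * q l y) := by
        rw [Finset.mul_sum]
        refine Finset.sum_congr rfl fun y _ => ?_
        field_simp
end

section
/- Formal Itô expansion identity (m = 1): Let ρ be an n×n complex matrix, H Hermitian, L arbitrary, η ∈ [0,1]. Working in the quotient where dt² = 0, dy·dt = 0, dy² = dt (i.e., treating dy, dt as formal variables and substituting dy² → dt, and discarding all terms of total degree ≥ 2 in dt after that substitution), one has K_{dy,dt}(ρ)/tr(K_{dy,dt}(ρ)) − ρ = (−i[H,ρ] + LρL† − ½(L†Lρ + ρL†L)) dt + √η (Lρ + ρL† − tr(Lρ + ρL†)ρ)(dy − √η tr(Lρ + ρL†) dt), where K_{dy,dt}(ρ) = MρM† + (1−η) dt LρL† and M = I − (iH + L†L/2) dt + √η dy L, assuming tr(ρ) = 1. -/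
set_option maxHeartbeats 1000000
set_option synthInstance.maxHeartbeats 400000


open Matrix Polynomial

/-- The algebra of formal Itô expansions `ℂ[dy,dt]/(dt², dy·dt, dy² − dt)`,
realized as `ℂ[X]/(X³)` with `dy ↦ X` and `dt ↦ X²`. -/
abbrev ItoAlg : Type := Polynomial ℂ ⧸ Ideal.span {(Polynomial.X : Polynomial ℂ) ^ 3}

/-- The formal increment `dy`. -/
noncomputable def dy : ItoAlg :=
  Ideal.Quotient.mk (Ideal.span {(Polynomial.X : Polynomial ℂ) ^ 3}) Polynomial.X

/-- The formal increment `dt = dy²`. -/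
noncomputable def dt : ItoAlg := dy ^ 2

/-- Lift of a complex matrix to a matrix of formal Itô expansions. -/
noncomputable def itoLift {n : ℕ} (A : Matrix (Fin n) (Fin n) ℂ) :
    Matrix (Fin n) (Fin n) ItoAlg :=
  A.map (algebraMap ℂ ItoAlg)

lemma dy_cube : dy ^ 3 = 0 := by
  rw [dy, ← map_pow]
  exact Ideal.Quotient.eq_zero_iff_mem.mpr (Ideal.subset_span rfl)

lemma itoLift_mul {n : ℕ} (A B : Matrix (Fin n) (Fin n) ℂ) :
    itoLift (A * B) = itoLift A * itoLift B := by
  simp [itoLift, Matrix.map_mul]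

lemma itoLift_one {n : ℕ} : itoLift (1 : Matrix (Fin n) (Fin n) ℂ) = 1 := by
  ext i j; simp [itoLift, Matrix.one_apply, apply_ite (algebraMap ℂ ItoAlg)]

lemma itoLift_add {n : ℕ} (A B : Matrix (Fin n) (Fin n) ℂ) :
    itoLift (A + B) = itoLift A + itoLift B := by
  ext i j; simp [itoLift]

lemma itoLift_sub {n : ℕ} (A B : Matrix (Fin n) (Fin n) ℂ) :
    itoLift (A - B) = itoLift A - itoLift B := by
  ext i j; simp [itoLift]

lemma itoLift_smul {n : ℕ} (c : ℂ) (A : Matrix (Fin n) (Fin n) ℂ) :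
    itoLift (c • A) = algebraMap ℂ ItoAlg c • itoLift A := by
  ext i j; simp [itoLift]

lemma trace_itoLift {n : ℕ} (A : Matrix (Fin n) (Fin n) ℂ) :
    (itoLift A).trace = algebraMap ℂ ItoAlg A.trace := by
  simp [itoLift, Matrix.trace, Matrix.diag, map_sum]

lemma trace_smul' {n : ℕ} (a : ItoAlg) (A : Matrix (Fin n) (Fin n) ItoAlg) :
    (a • A).trace = a * A.trace := by
  simp [Matrix.trace, Matrix.diag, Finset.mul_sum]

/-- Abstract expansion of `K`. -/
lemma keyK {R A : Type*} [CommRing R] [Ring A] [Algebra R A]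
    (dyv s g : R) (hdy3 : dyv ^ 3 = 0) (hg : s * s = g)
    (a b l ld r : A) :
    (1 - dyv ^ 2 • a + (s * dyv) • l) * r * (1 - dyv ^ 2 • b + (s * dyv) • ld)
      + ((1 - g) * dyv ^ 2) • (l * r * ld)
    = r + dyv ^ 2 • (l * r * ld - a * r - r * b) + (s * dyv) • (l * r + r * ld) := by
  simp only [sub_mul, mul_sub, add_mul, mul_add, smul_mul_assoc, mul_smul_comm,
    smul_smul, mul_one, one_mul, smul_sub, smul_add]
  match_scalars <;>
    first
      | ring1
      | linear_combination dyv * hdy3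
      | linear_combination s * hdy3
      | linear_combination (-s) * hdy3
      | linear_combination dyv ^ 2 * hg

/-- Abstract final combination. -/
lemma keyFinal {R A : Type*} [CommRing R] [Ring A] [Algebra R A]
    (dyv s c : R) (hdy3 : dyv ^ 3 = 0) (p q r : A) :
    (1 - s * c * dyv + (s * c) ^ 2 * dyv ^ 2) • (r + dyv ^ 2 • p + (s * dyv) • q) - r
    = dyv ^ 2 • p + (s * (dyv - s * c * dyv ^ 2)) • (q - c • r) := by
  match_scalars <;>
    first
      | ring1
      | linear_combination ((s * c) ^ 2 * dyv - s * c) * hdy3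
      | linear_combination (s * (s * c) ^ 2) * hdy3

/-- Formal Itô expansion identity (Lemma 1 of the paper, `m = 1`).
With `M = I − (iH + LᴴL/2)dt + √η dy L`, `K_{dy,dt}(ρ) = MρMᴴ + (1−η) dt LρLᴴ`,
and `tr(ρ) = 1`, working modulo `dt² = dy·dt = 0`, `dy² = dt`, one has
`K(ρ)/tr(K(ρ)) − ρ = (−i[H,ρ] + LρLᴴ − ½(LᴴLρ + ρLᴴL)) dt
  + √η (Lρ + ρLᴴ − tr(Lρ + ρLᴴ)ρ)(dy − √η tr(Lρ + ρLᴴ) dt)`,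
the inverse of `tr(K(ρ))` being taken in the quotient algebra. -/
theorem stmt13 {n : ℕ}
    (H L ρ : Matrix (Fin n) (Fin n) ℂ) (hH : H.IsHermitian)
    (hρtr : ρ.trace = 1)
    (η : ℝ) (hη : η ∈ Set.Icc (0 : ℝ) 1)
    (M Mdag : Matrix (Fin n) (Fin n) ItoAlg)
    (hM : M = itoLift 1 - dt • itoLift (Complex.I • H + (2 : ℂ)⁻¹ • (Lᴴ * L))
        + (algebraMap ℂ ItoAlg (Real.sqrt η : ℂ) * dy) • itoLift L)
    (hMdag : Mdag = itoLift 1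
        - dt • itoLift ((-Complex.I) • H + (2 : ℂ)⁻¹ • (Lᴴ * L))
        + (algebraMap ℂ ItoAlg (Real.sqrt η : ℂ) * dy) • itoLift Lᴴ)
    (K : Matrix (Fin n) (Fin n) ItoAlg)
    (hK : K = M * itoLift ρ * Mdag
        + (algebraMap ℂ ItoAlg ((1 : ℂ) - (η : ℂ)) * dt) •
            (itoLift L * itoLift ρ * itoLift Lᴴ)) :
    Ring.inverse K.trace • K - itoLift ρ =
      dt • itoLift ((-Complex.I) • (H * ρ - ρ * H) + L * ρ * Lᴴ
          - (2 : ℂ)⁻¹ • (Lᴴ * L * ρ + ρ * (Lᴴ * L)))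
        + (algebraMap ℂ ItoAlg (Real.sqrt η : ℂ) *
            (dy - algebraMap ℂ ItoAlg ((Real.sqrt η : ℂ) * (L * ρ + ρ * Lᴴ).trace) * dt)) •
            itoLift (L * ρ + ρ * Lᴴ - (L * ρ + ρ * Lᴴ).trace • ρ) := by
  set s : ItoAlg := algebraMap ℂ ItoAlg (Real.sqrt η : ℂ) with hs
  set c : ItoAlg := algebraMap ℂ ItoAlg ((L * ρ + ρ * Lᴴ).trace) with hc
  have hs2 : s * s = algebraMap ℂ ItoAlg (η : ℂ) := by
    rw [hs, ← _root_.map_mul, ← Complex.ofReal_mul, Real.mul_self_sqrt hη.1]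
  have he1 : algebraMap ℂ ItoAlg ((1 : ℂ) - (η : ℂ))
      = 1 - algebraMap ℂ ItoAlg (η : ℂ) := by
    rw [_root_.map_sub, _root_.map_one]
  -- step 1: simplified form of K
  have hK2 : K = itoLift ρ
      + dy ^ 2 • itoLift (L * ρ * Lᴴ - (Complex.I • H + (2 : ℂ)⁻¹ • (Lᴴ * L)) * ρ
          - ρ * ((-Complex.I) • H + (2 : ℂ)⁻¹ • (Lᴴ * L)))
      + (s * dy) • itoLift (L * ρ + ρ * Lᴴ) := by
    rw [hK, hM, hMdag, he1]
    rw [show itoLift (L * ρ + ρ * Lᴴ) = itoLift L * itoLift ρ + itoLift ρ * itoLift Lᴴ by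
      rw [itoLift_add, itoLift_mul, itoLift_mul]]
    rw [show itoLift (L * ρ * Lᴴ - (Complex.I • H + (2 : ℂ)⁻¹ • (Lᴴ * L)) * ρ
          - ρ * ((-Complex.I) • H + (2 : ℂ)⁻¹ • (Lᴴ * L)))
        = itoLift L * itoLift ρ * itoLift Lᴴ
          - itoLift (Complex.I • H + (2 : ℂ)⁻¹ • (Lᴴ * L)) * itoLift ρ
          - itoLift ρ * itoLift ((-Complex.I) • H + (2 : ℂ)⁻¹ • (Lᴴ * L)) by
      rw [itoLift_sub, itoLift_sub, itoLift_mul, itoLift_mul, itoLift_mul, itoLift_mul]]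
    simp only [itoLift_one, dt]
    exact keyK dy s (algebraMap ℂ ItoAlg (η : ℂ)) dy_cube hs2
      (itoLift (Complex.I • H + (2 : ℂ)⁻¹ • (Lᴴ * L)))
      (itoLift ((-Complex.I) • H + (2 : ℂ)⁻¹ • (Lᴴ * L)))
      (itoLift L) (itoLift Lᴴ) (itoLift ρ)
  -- step 2: trace of the dt-part vanishes
  have hP0 : (L * ρ * Lᴴ - (Complex.I • H + (2 : ℂ)⁻¹ • (Lᴴ * L)) * ρ
      - ρ * ((-Complex.I) • H + (2 : ℂ)⁻¹ • (Lᴴ * L))).trace = 0 := by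
    simp only [Matrix.add_mul, Matrix.mul_add, Matrix.smul_mul, Matrix.mul_smul,
      Matrix.trace_sub, Matrix.trace_add, Matrix.trace_smul, smul_eq_mul]
    rw [Matrix.trace_mul_cycle L ρ Lᴴ, Matrix.trace_mul_comm ρ (Lᴴ * L),
      Matrix.trace_mul_comm ρ H]
    ring
  -- step 3: trace of K
  have htrace : K.trace = 1 + s * c * dy := by
    rw [hK2, Matrix.trace_add, Matrix.trace_add, trace_smul', trace_smul',
      trace_itoLift, trace_itoLift, trace_itoLift, hρtr, hP0, _root_.map_zero,
      _root_.map_one, mul_zero, ← hc]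
    ring
  -- step 4: the inverse of the trace
  have hu : (1 + s * c * dy) * (1 - s * c * dy + (s * c) ^ 2 * dy ^ 2) = 1 := by
    linear_combination ((s * c) ^ 3) * dy_cube
  have hinv : Ring.inverse K.trace = 1 - s * c * dy + (s * c) ^ 2 * dy ^ 2 := by
    rw [htrace]
    have := Ring.inverse_unit
      (⟨1 + s * c * dy, 1 - s * c * dy + (s * c) ^ 2 * dy ^ 2, hu,
        by rw [mul_comm]; exact hu⟩ : ItoAlgˣ)
    simpa using this
  -- step 5: rewrite the commutator form of the drift
  have hPP' : ((-Complex.I) • (H * ρ - ρ * H) + L * ρ * Lᴴ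
        - (2 : ℂ)⁻¹ • (Lᴴ * L * ρ + ρ * (Lᴴ * L)))
      = (L * ρ * Lᴴ - (Complex.I • H + (2 : ℂ)⁻¹ • (Lᴴ * L)) * ρ
          - ρ * ((-Complex.I) • H + (2 : ℂ)⁻¹ • (Lᴴ * L))) := by
    simp only [Matrix.add_mul, Matrix.mul_add, Matrix.smul_mul, Matrix.mul_smul,
      smul_sub, smul_add, neg_smul, Matrix.neg_mul, Matrix.mul_neg, smul_neg, neg_neg]
    abel
  -- conclusion
  have hq : itoLift (L * ρ + ρ * Lᴴ - (L * ρ + ρ * Lᴴ).trace • ρ)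
      = itoLift (L * ρ + ρ * Lᴴ) - c • itoLift ρ := by
    rw [itoLift_sub, itoLift_smul, hc]
  rw [hinv, hK2, _root_.map_mul, hq, hPP', ← hs, ← hc]
  simp only [dt]
  exact keyFinal dy s c dy_cube
    (itoLift (L * ρ * Lᴴ - (Complex.I • H + (2 : ℂ)⁻¹ • (Lᴴ * L)) * ρ
      - ρ * ((-Complex.I) • H + (2 : ℂ)⁻¹ • (Lᴴ * L))))
    (itoLift (L * ρ + ρ * Lᴴ)) (itoLift ρ)
end
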